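/- For all n ≥ 1, the game burning number of the path P_n satisfies ⌈√(2n+1) − 1⌉ ≤ b_g(P_n) ≤ ⌈√(2n + 1/4) − 1/2⌉, and the Staller-start version satisfies ⌈√(2n+2) − 1⌉ ≤ b_g'(P_n) ≤ ⌈√(2n + 1/4) − 1/2⌉. -/

import Mathlib

namespace BurningGame

/-- One spreading phase: all neighbors of burned vertices become burned. -/
noncomputable def spread {V : Type*} [Fintype V] [DecidableEq V] (G : SimpleGraph V) (B : Finset V) : Finset V :=
  ((↑B : Set V) ∪ {v | ∃ u ∈ B, G.Adj u v}).toFinite.toFinset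

/-- `EndBy G turn i B k`: starting from burned set `B` at round index `i`
(the player selecting in round `i` is Burner iff `turn i = true`; Burner's selections are
quantified existentially, Staller's universally), Burner can force the game to end
within `k` further rounds. -/
def EndBy {V : Type*} [Fintype V] [DecidableEq V] (G : SimpleGraph V) (turn : ℕ → Bool) :
    ℕ → Finset V → ℕ → Prop
  | _, B, 0 => B = Finset.univ
  | i, B, k + 1 => B = Finset.univ ∨
      spread G B = Finset.univ ∨
      (if turn i then ∃ v ∉ spread G B, EndBy G turn (i + 1) (insert v (spread G B)) k
       else ∀ v ∉ spread G B, EndBy G turn (i + 1) (insert v (spread G B)) k)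

/-- Game burning number relative to a preburned set `S` (Burner starts). -/
noncomputable def bgRel {V : Type*} [Fintype V] [DecidableEq V] (G : SimpleGraph V) (S : Finset V) : ℕ :=
  sInf {k | EndBy G (fun i => i % 2 == 0) 0 S k}

/-- The game burning number (Burner starts). -/
noncomputable def bg {V : Type*} [Fintype V] [DecidableEq V] (G : SimpleGraph V) : ℕ := bgRel G ∅

/-- The Staller-start game burning number. -/
noncomputable def bg' {V : Type*} [Fintype V] [DecidableEq V] (G : SimpleGraph V) : ℕ :=
  sInf {k | EndBy G (fun i => i % 2 == 1) 0 ∅ k}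

/-- The burning number: only Burner plays. -/
noncomputable def burn {V : Type*} [Fintype V] [DecidableEq V] (G : SimpleGraph V) : ℕ :=
  sInf {k | EndBy G (fun _ => true) 0 ∅ k}

/-- The cooling number: only Staller plays. -/
noncomputable def cool {V : Type*} [Fintype V] [DecidableEq V] (G : SimpleGraph V) : ℕ :=
  sInf {k | EndBy G (fun _ => false) 0 ∅ k}

/-!
Lower bounds: with `k` rounds left and burned set `B`, Staller can keep the number of vertices
burned at the end below `#B + k * cutSize B + moveGain k`. On a path, spreading never enlarges
the cut, a Burner move enlarges it by at most two, and Staller can always move without enlarging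
it; moving first, Staller burns an end vertex.

Upper bounds: a vertex Burner burns with `m` spreading rounds left covers an interval of
`2 * m + 1` vertices, and in a game of `K` rounds Burner's intervals have total length
`K * (K + 1) / 2`, so laid side by side they cover the path. If Staller moves first, its vertex
covers a central interval and leaves two end segments whose total length falls short of the total
length of Burner's intervals by at least `K - 1`. Burner's lengths grow by four each, so their
subset sums leave no gap longer than three, and the intervals can be split between the segments
(when both are nonempty, `K - 1 ≥ 3`).
-/

open Finset SimpleGraph

section Spread

variable {V : Type*} [Fintype V] [DecidableEq V] {G : SimpleGraph V} {B : Finset V}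

lemma mem_spread {v : V} : v ∈ spread G B ↔ v ∈ B ∨ ∃ u ∈ B, G.Adj u v := by
  simp [spread]

lemma subset_spread (B : Finset V) : B ⊆ spread G B := fun _ hv => mem_spread.2 (Or.inl hv)

@[simp]
lemma spread_empty : spread G (∅ : Finset V) = ∅ := by
  ext v; simp [mem_spread]

variable [DecidableRel G.Adj]

def cutSize (G : SimpleGraph V) [DecidableRel G.Adj] (B : Finset V) : ℕ := #(G.interedges B Bᶜ)

lemma mem_interedges_compl {p : V × V} :
    p ∈ G.interedges B Bᶜ ↔ p.1 ∈ B ∧ p.2 ∉ B ∧ G.Adj p.1 p.2 := by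
  simp [mem_interedges_iff]

@[simp]
lemma cutSize_empty : cutSize G (∅ : Finset V) = 0 := by
  simp [cutSize, interedges_empty_left]

lemma card_spread_le : #(spread G B) ≤ #B + cutSize G B := by
  have hsub : spread G B ⊆ B ∪ (G.interedges B Bᶜ).image Prod.snd := by
    intro v hv
    rcases mem_spread.1 hv with hvB | ⟨u, huB, huv⟩
    · exact mem_union_left _ hvB
    · by_cases hvB : v ∈ B
      · exact mem_union_left _ hvB
      · exact mem_union_right _
          (mem_image.2 ⟨(u, v), mem_interedges_compl.2 ⟨huB, hvB, huv⟩, rfl⟩)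
  exact (card_le_card hsub).trans ((card_union_le _ _).trans (Nat.add_le_add_left card_image_le _))

lemma cutSize_insert_le (B : Finset V) (v : V) :
    cutSize G (insert v B) ≤ cutSize G B + G.degree v := by
  have hsub : G.interedges (insert v B) (insert v B)ᶜ ⊆
      G.interedges B Bᶜ ∪ (G.neighborFinset v).image (Prod.mk v) := by
    rintro ⟨x, y⟩ hp
    obtain ⟨hx, hy, hxy⟩ := mem_interedges_compl.1 hp
    rcases mem_insert.1 hx with rfl | hx
    · exact mem_union_right _ (mem_image.2 ⟨y, (mem_neighborFinset _ _ _).2 hxy, rfl⟩)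
    · exact mem_union_left _
        (mem_interedges_compl.2 ⟨hx, fun hyB => hy (mem_insert_of_mem hyB), hxy⟩)
  exact (card_le_card hsub).trans ((card_union_le _ _).trans (Nat.add_le_add_left card_image_le _))

lemma eq_of_adj_of_degree_le_two {u w x y : V} (hdeg : G.degree u ≤ 2) (hw : G.Adj u w)
    (hx : G.Adj u x) (hy : G.Adj u y) (hxw : x ≠ w) (hyw : y ≠ w) : x = y := by
  by_contra hxy
  have : 2 < G.degree u :=
    two_lt_card.2 ⟨w, by simpa using hw, x, by simpa using hx, y, by simpa using hy,
      hxw.symm, hyw.symm, hxy⟩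
  omega

/-- In a graph of maximum degree two, every vertex reached by the fire has at most one
unburned neighbour left, so spreading does not enlarge the cut. -/
lemma cutSize_spread_le (hdeg : ∀ v, G.degree v ≤ 2) (B : Finset V) :
    cutSize G (spread G B) ≤ cutSize G B := by
  set C' := G.interedges (spread G B) (spread G B)ᶜ
  set C := G.interedges B Bᶜ
  have hold : #{p ∈ C' | p.1 ∈ B} ≤ #{p ∈ C | p.2 ∉ spread G B} := by
    refine card_le_card fun p hp => ?_
    obtain ⟨hp, hp1⟩ := mem_filter.1 hp
    obtain ⟨-, hp2, hadj⟩ := mem_interedges_compl.1 hp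
    exact mem_filter.2
      ⟨mem_interedges_compl.2 ⟨hp1, fun h => hp2 (subset_spread B h), hadj⟩, hp2⟩
  have hnew : #{p ∈ C' | p.1 ∉ B} ≤ #(spread G B \ B) := by
    refine card_le_card_of_injOn Prod.fst (fun p hp => ?_) fun p hp q hq hpq => ?_
    · obtain ⟨hp, hp1⟩ := mem_filter.1 hp
      exact mem_sdiff.2 ⟨(mem_interedges_compl.1 hp).1, hp1⟩
    · obtain ⟨hp, hp1⟩ := mem_filter.1 (mem_coe.1 hp)
      obtain ⟨hq, -⟩ := mem_filter.1 (mem_coe.1 hq)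
      obtain ⟨hpB, hp2, hp⟩ := mem_interedges_compl.1 hp
      obtain ⟨-, hq2, hq⟩ := mem_interedges_compl.1 hq
      obtain ⟨w, hwB, hwp⟩ := (mem_spread.1 hpB).resolve_left hp1
      have hw : w ∈ spread G B := subset_spread B hwB
      rw [← hpq] at hq
      exact Prod.ext hpq (eq_of_adj_of_degree_le_two (hdeg p.1) hwp.symm hp hq
        (fun h => hp2 (h ▸ hw)) fun h => hq2 (h ▸ hw))
  have hreached : #(spread G B \ B) ≤ #{p ∈ C | p.2 ∈ spread G B} := by
    refine card_le_card_of_surjOn Prod.snd fun v hv => ?_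
    obtain ⟨hv, hvB⟩ := mem_sdiff.1 hv
    obtain ⟨u, huB, huv⟩ := (mem_spread.1 hv).resolve_left hvB
    exact ⟨(u, v), mem_filter.2 ⟨mem_interedges_compl.2 ⟨huB, hvB, huv⟩, hv⟩, rfl⟩
  have hC' := card_filter_add_card_filter_not (s := C') fun p => p.1 ∈ B
  have hC := card_filter_add_card_filter_not (s := C) fun p => p.2 ∉ spread G B
  simp only [not_not] at hC
  show #C' ≤ #C
  omega

/-- Burn an unburned neighbour of `B`: it has at most one further neighbour, while the edge it
was reached through leaves the cut. -/
lemma exists_cutSize_insert_le (hconn : G.Connected) (hdeg : ∀ v, G.degree v ≤ 2)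
    (hB : B.Nonempty) (hB' : B ≠ univ) : ∃ v ∉ B, cutSize G (insert v B) ≤ cutSize G B := by
  obtain ⟨a, ha⟩ := hB
  obtain ⟨b, hb⟩ := not_forall.1 (mt eq_univ_iff_forall.2 hB')
  obtain ⟨⟨⟨u, v⟩, huv⟩, -, hu, hv⟩ :=
    (hconn.preconnected a b).some.exists_boundary_dart (B : Set V) ha hb
  refine ⟨v, hv, ?_⟩
  have hmem : (u, v) ∈ G.interedges B Bᶜ := mem_interedges_compl.2 ⟨hu, hv, huv⟩
  have hsub : G.interedges (insert v B) (insert v B)ᶜ ⊆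
      (G.interedges B Bᶜ).erase (u, v) ∪ ((G.neighborFinset v).erase u).image (Prod.mk v) := by
    rintro ⟨x, y⟩ hp
    obtain ⟨hx, hy, hxy⟩ := mem_interedges_compl.1 hp
    rcases mem_insert.1 hx with rfl | hx
    · refine mem_union_right _ (mem_image.2 ⟨y, mem_erase.2 ⟨?_, ?_⟩, rfl⟩)
      · rintro rfl; exact hy (mem_insert_of_mem hu)
      · exact (mem_neighborFinset _ _ _).2 hxy
    · refine mem_union_left _ (mem_erase.2 ⟨?_, ?_⟩)
      · rintro ⟨⟩; exact hy (mem_insert_self _ _)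
      · exact mem_interedges_compl.2 ⟨hx, fun hyB => hy (mem_insert_of_mem hyB), hxy⟩
  have hcut := card_erase_of_mem hmem
  have hnbr := card_erase_of_mem ((mem_neighborFinset _ _ _).2 huv.symm)
  have hpos := card_pos.2 ⟨_, hmem⟩
  have :=
    (card_le_card hsub).trans ((card_union_le _ _).trans (Nat.add_le_add_left card_image_le _))
  have := hdeg v
  simp only [cutSize, card_neighborFinset_eq_degree] at *
  omega

end Spread

/-- Over `k` more rounds, the first of which is Burner's iff `b`: a Burner move followed by `m`
rounds adds a vertex and at most two cut edges, which ignite at most `2 * m` further vertices;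
a Staller move adds a vertex and, by `exists_cutSize_insert_le`, no cut edge. -/
def moveGain : ℕ → Bool → ℕ
  | 0, _ => 0
  | k + 1, true => moveGain k false + 2 * k + 1
  | k + 1, false => moveGain k true + 1

lemma two_mul_moveGain_le (k : ℕ) :
    2 * moveGain k true ≤ k * k + 2 * k ∧ 2 * moveGain k false ≤ k * k + 1 := by
  induction k with
  | zero => simp [moveGain]
  | succ k ih =>
    simp only [moveGain]
    constructor <;> nlinarith [ih.1, ih.2]

section LowerBound

variable {V : Type*} [Fintype V] [DecidableEq V] {G : SimpleGraph V} [DecidableRel G.Adj]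

lemma card_insert_spread_le (B : Finset V) (v : V) :
    #(insert v (spread G B)) ≤ #B + cutSize G B + 1 :=
  (card_insert_le _ _).trans (Nat.add_le_add_right card_spread_le 1)

theorem not_endBy_of_potential_lt (hconn : G.Connected) (hdeg : ∀ v, G.degree v ≤ 2)
    {turn : ℕ → Bool} (halt : ∀ i, turn (i + 1) = !turn i) (k : ℕ) :
    ∀ i (B : Finset V), (B.Nonempty ∨ turn i = true) →
      #B + k * cutSize G B + moveGain k (turn i) < Fintype.card V → ¬EndBy G turn i B k := by
  induction k with
  | zero =>
    intro i B _ hlt hB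
    simp only [EndBy] at hB
    simp [hB, moveGain] at hlt
  | succ k ih =>
    intro i B hB hlt hE
    have hcut := card_spread_le (G := G) (B := B)
    have hB_ne : B ≠ univ := by
      rintro rfl
      rw [card_univ] at hlt
      omega
    have hspread_ne : spread G B ≠ univ := by
      intro h
      rw [h, card_univ] at hcut
      nlinarith
    simp only [EndBy, hB_ne, hspread_ne, false_or] at hE
    cases hturn : turn i
    · simp only [hturn, Bool.false_eq_true, ↓reduceIte] at hE
      have hBne : B.Nonempty := hB.resolve_right (by simp [hturn])
      obtain ⟨v, hv, hvcut⟩ :=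
        exists_cutSize_insert_le hconn hdeg (hBne.mono (subset_spread B)) hspread_ne
      refine ih (i + 1) _ (Or.inl (insert_nonempty _ _)) ?_ (hE v hv)
      have hcut' := hvcut.trans (cutSize_spread_le hdeg B)
      have hcard := card_insert_spread_le (G := G) B v
      rw [hturn, moveGain] at hlt
      rw [halt, hturn, Bool.not_false]
      nlinarith
    · simp only [hturn, ↓reduceIte] at hE
      obtain ⟨v, -, hE⟩ := hE
      refine ih (i + 1) _ (Or.inl (insert_nonempty _ _)) ?_ hE
      have hcut' := (cutSize_insert_le (spread G B) v).trans
        (Nat.add_le_add (cutSize_spread_le hdeg B) (hdeg v))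
      have hcard := card_insert_spread_le (G := G) B v
      rw [hturn, moveGain] at hlt
      rw [halt, hturn, Bool.not_true]
      nlinarith

theorem sq_le_of_endBy_burner_first (hconn : G.Connected) (hdeg : ∀ v, G.degree v ≤ 2) {k : ℕ}
    (h : EndBy G (fun i => i % 2 == 0) 0 ∅ k) : 2 * Fintype.card V + 1 ≤ (k + 1) ^ 2 := by
  by_contra hlt
  refine not_endBy_of_potential_lt hconn hdeg (fun i => ?_) k 0 ∅ (Or.inr rfl) ?_ h
  · rcases Nat.mod_two_eq_zero_or_one i with hi | hi <;> simp [Nat.add_mod, hi]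
  · have := (two_mul_moveGain_le k).1
    show #∅ + k * cutSize G ∅ + moveGain k true < _
    simp only [card_empty, cutSize_empty]
    nlinarith

theorem sq_le_of_endBy_staller_first (hconn : G.Connected) (hdeg : ∀ v, G.degree v ≤ 2)
    {v₀ : V} (hv₀ : G.degree v₀ ≤ 1) {k : ℕ} (h : EndBy G (fun i => i % 2 == 1) 0 ∅ k) :
    2 * Fintype.card V + 2 ≤ (k + 1) ^ 2 := by
  have hne : (∅ : Finset V) ≠ univ := (univ_nonempty_iff.2 hconn.nonempty).ne_empty.symm
  cases k with
  | zero => exact absurd h hne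
  | succ k =>
    simp only [EndBy, spread_empty, hne, false_or, insert_empty] at h
    rw [if_neg (by decide)] at h
    by_contra hlt
    refine not_endBy_of_potential_lt hconn hdeg (fun i => ?_) k 1 {v₀} (Or.inr rfl) ?_
      (h v₀ (notMem_empty _))
    · rcases Nat.mod_two_eq_zero_or_one i with hi | hi <;> simp [Nat.add_mod, hi]
    · have := (two_mul_moveGain_le k).1
      have hcut := cutSize_insert_le (G := G) ∅ v₀
      simp only [cutSize_empty, zero_add, insert_empty] at hcut
      show #{v₀} + k * cutSize G {v₀} + moveGain k true < _
      simp only [card_singleton]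
      nlinarith

end LowerBound

section Path

variable {n : ℕ}

lemma pathGraph_degree_le_two [DecidableRel (pathGraph n).Adj] (v : Fin n) :
    (pathGraph n).degree v ≤ 2 := by
  by_contra h
  obtain ⟨a, ha, b, hb, c, hc, hab, hac, hbc⟩ := two_lt_card.1 (not_le.1 h)
  simp only [mem_neighborFinset, pathGraph_adj] at ha hb hc
  simp only [ne_eq, Fin.ext_iff] at hab hac hbc
  omega

lemma pathGraph_degree_zero_le_one [DecidableRel (pathGraph n).Adj] (hn : 0 < n) :
    (pathGraph n).degree ⟨0, hn⟩ ≤ 1 := by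
  by_contra h
  obtain ⟨a, ha, b, hb, hab⟩ := one_lt_card.1 (not_le.1 h)
  simp only [mem_neighborFinset, pathGraph_adj] at ha hb
  simp only [ne_eq, Fin.ext_iff] at hab
  omega

lemma exists_mem_spread_dist_le {B : Finset (Fin n)} {b x : Fin n} {k : ℕ} (hb : b ∈ B)
    (h : Nat.dist x b ≤ k + 1) : ∃ b' ∈ spread (pathGraph n) B, Nat.dist x b' ≤ k := by
  unfold Nat.dist at *
  rcases lt_trichotomy (x : ℕ) b with hlt | heq | hgt
  · refine ⟨⟨b - 1, by omega⟩,
      mem_spread.2 (Or.inr ⟨b, hb, pathGraph_adj.2 (Or.inr ?_)⟩), ?_⟩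
    · simp only; omega
    · simp only; omega
  · exact ⟨b, subset_spread B hb, by omega⟩
  · refine ⟨⟨b + 1, by omega⟩,
      mem_spread.2 (Or.inr ⟨b, hb, pathGraph_adj.2 (Or.inl rfl)⟩), ?_⟩
    simp only; omega

/-- `m` counts the spreading rounds left after a move, so the move of round `i + k - 1 - m`
is played with `m` rounds left; Burner plays there the vertex nearest to `c m`. -/
theorem endBy_pathGraph_of_forall_near (turn : ℕ → Bool) (c : ℕ → ℕ) (k : ℕ) :
    ∀ i (B : Finset (Fin n)), (∀ x : Fin n, (∃ b ∈ B, Nat.dist x b ≤ k) ∨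
      ∃ m < k, turn (i + k - 1 - m) = true ∧ Nat.dist x (c m) ≤ m) →
      EndBy (pathGraph n) turn i B k := by
  induction k with
  | zero =>
    intro i B h
    refine eq_univ_iff_forall.2 fun x => ?_
    obtain ⟨b, hb, hxb⟩ := (h x).resolve_right (by simp)
    rwa [Fin.ext (Nat.eq_of_dist_eq_zero (Nat.le_zero.1 hxb))]
  | succ k ih =>
    intro i B h
    by_cases hB : B = univ
    · exact Or.inl hB
    by_cases hspread : spread (pathGraph n) B = univ
    · exact Or.inr (Or.inl hspread)
    refine Or.inr (Or.inr ?_)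
    obtain ⟨w, hw⟩ := not_forall.1 (mt eq_univ_iff_forall.2 hspread)
    set cv : Fin n := ⟨min (c k) (n - 1), by have := w.isLt; omega⟩
    have step : ∀ B' : Finset (Fin n), spread (pathGraph n) B ⊆ B' →
        (turn i = true → cv ∈ B') → EndBy (pathGraph n) turn (i + 1) B' k := by
      intro B' hB' hcv
      refine ih (i + 1) B' fun x => ?_
      rcases h x with ⟨b, hb, hxb⟩ | ⟨m, hm, hturn, hxm⟩
      · obtain ⟨b', hb', hxb'⟩ := exists_mem_spread_dist_le hb hxb
        exact Or.inl ⟨b', hB' hb', hxb'⟩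
      · rcases lt_or_eq_of_le (Nat.le_of_lt_succ hm) with hm | rfl
        · exact Or.inr ⟨m, hm, by rwa [show i + 1 + k - 1 - m = i + (k + 1) - 1 - m by omega],
            hxm⟩
        · refine Or.inl ⟨cv, hcv (by rwa [show i + (m + 1) - 1 - m = i by omega] at hturn), ?_⟩
          have := x.isLt
          unfold Nat.dist at *
          simp only [cv]
          omega
    cases hturn : turn i
    · exact fun v _ => step _ (subset_insert _ _) (by simp [hturn])
    · simp only [↓reduceIte]
      by_cases hcv : cv ∈ spread (pathGraph n) B
      · exact ⟨w, hw, step _ (subset_insert _ _) fun _ => mem_insert_of_mem hcv⟩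
      · exact ⟨cv, hcv, step _ (subset_insert _ _) fun _ => mem_insert_self _ _⟩

end Path

section Packing

variable {α : Type*} [LinearOrder α]

/-- Centre of the interval of length `2 * ρ t + 1` assigned to `t ∈ T` when these intervals are
laid out consecutively from `0`, in increasing order of `t`. -/
def packCenter (T : Finset α) (ρ : α → ℕ) (t : α) : ℕ :=
  ∑ s ∈ T with s < t, (2 * ρ s + 1) + ρ t

lemma exists_dist_packCenter_le (ρ : α → ℕ) (T : Finset α) {x : ℕ}
    (hx : x < ∑ t ∈ T, (2 * ρ t + 1)) :
    ∃ t ∈ T, Nat.dist x (packCenter T ρ t) ≤ ρ t := by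
  classical
  induction T using Finset.induction_on_max generalizing x with
  | empty => simp at hx
  | insert a T hlt ih =>
    have ha : a ∉ T := fun h => lt_irrefl a (hlt a h)
    have hbelow : ∀ t ∈ T, packCenter (insert a T) ρ t = packCenter T ρ t := by
      intro t ht
      simp only [packCenter, filter_insert, (hlt t ht).not_gt, ↓reduceIte]
    rw [sum_insert ha] at hx
    by_cases hxT : x < ∑ t ∈ T, (2 * ρ t + 1)
    · obtain ⟨t, ht, hxt⟩ := ih hxT
      exact ⟨t, mem_insert_of_mem ht, by rwa [hbelow t ht]⟩
    · refine ⟨a, mem_insert_self a T, ?_⟩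
      have : ({s ∈ insert a T | s < a} : Finset α) = T := by
        ext s
        simp only [mem_filter, mem_insert]
        constructor
        · rintro ⟨rfl | hs, hsa⟩
          · exact absurd hsa (lt_irrefl _)
          · exact hs
        · exact fun hs => ⟨Or.inr hs, hlt s hs⟩
      simp only [packCenter, this]
      unfold Nat.dist
      omega

end Packing

lemma exists_subset_sum_mem_Icc (f : ℕ → ℕ) (d : ℕ)
    (hf : ∀ j, f j ≤ ∑ i ∈ range j, f i + (d + 1)) (M : ℕ) :
    ∀ u, u + d ≤ ∑ i ∈ range M, f i →
      ∃ T ⊆ range M, u ≤ ∑ i ∈ T, f i ∧ ∑ i ∈ T, f i ≤ u + d := by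
  induction M with
  | zero => intro u hu; exact ⟨∅, empty_subset _, by simp at hu ⊢; omega, by simp⟩
  | succ M ih =>
    intro u hu
    rw [sum_range_succ] at hu
    have hmono := range_subset_range.2 (Nat.le_succ M)
    by_cases hsmall : u + d ≤ ∑ i ∈ range M, f i
    · obtain ⟨T, hT, hT'⟩ := ih u hsmall
      exact ⟨T, hT.trans hmono, hT'⟩
    by_cases hfu : f M ≤ u
    · obtain ⟨T, hT, hlo, hhi⟩ := ih (u - f M) (by omega)
      have hM : M ∉ T := fun h => by simpa using hT h
      refine ⟨insert M T, insert_subset (by simp) (hT.trans hmono), ?_⟩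
      rw [sum_insert hM]
      omega
    by_cases hrest : u ≤ ∑ i ∈ range M, f i
    · exact ⟨range M, hmono, hrest, by omega⟩
    · have := hf M
      exact ⟨{M}, by simp, by simp; omega, by simp; omega⟩

/-- In a game of `K` rounds where Burner moves first and the players alternate, Burner's moves
are those with `burnerRadius K q` spreading rounds left, `q < (K + 1) / 2`. -/
def burnerRadius (K q : ℕ) : ℕ := 2 * q + (K + 1) % 2

lemma sum_range_burnerRadius (K q : ℕ) :
    ∑ i ∈ range q, (2 * burnerRadius K i + 1) + 2 * q =
      2 * q * q + (2 * ((K + 1) % 2) + 1) * q := by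
  induction q with
  | zero => simp
  | succ q ih => rw [sum_range_succ, burnerRadius]; nlinarith

lemma two_mul_sum_burnerRadius (K : ℕ) :
    2 * ∑ q ∈ range ((K + 1) / 2), (2 * burnerRadius K q + 1) = K * (K + 1) := by
  have hsum := sum_range_burnerRadius K ((K + 1) / 2)
  rcases Nat.even_or_odd' K with ⟨Q, rfl | rfl⟩
  · rcases Q with _ | Q
    · simp
    · have h1 : (2 * (Q + 1) + 1) % 2 = 1 := by omega
      have h2 : (2 * (Q + 1) + 1) / 2 = Q + 1 := by omega
      rw [h1, h2] at hsum
      rw [h2]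
      nlinarith
  · have h1 : (2 * Q + 1 + 1) % 2 = 0 := by omega
    have h2 : (2 * Q + 1 + 1) / 2 = Q + 1 := by omega
    rw [h1, h2] at hsum
    rw [h2]
    nlinarith

lemma burnerRadius_le_sum (K q : ℕ) :
    2 * burnerRadius K q + 1 ≤ ∑ i ∈ range q, (2 * burnerRadius K i + 1) + 4 := by
  have hsum := sum_range_burnerRadius K q
  have he : (K + 1) % 2 ≤ 1 := by omega
  rw [show burnerRadius K q = 2 * q + (K + 1) % 2 from rfl]
  rcases q with _ | _ | q
  · omega
  · simp at hsum ⊢; omega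
  · generalize (K + 1) % 2 = e at *
    nlinarith

lemma exists_burnerRadius_split (K : ℕ) {a b : ℕ} (hab : 2 * (a + b) ≤ K * (K + 1))
    (h3 : a = 0 ∨ b = 0 ∨ 2 * (a + b + 3) ≤ K * (K + 1)) :
    ∃ T ⊆ range ((K + 1) / 2), a ≤ ∑ q ∈ T, (2 * burnerRadius K q + 1) ∧
      b ≤ ∑ q ∈ range ((K + 1) / 2) \ T, (2 * burnerRadius K q + 1) := by
  have hS := two_mul_sum_burnerRadius K
  rcases h3 with rfl | rfl | h3
  · exact ⟨∅, empty_subset _, Nat.zero_le _, by simp only [sdiff_empty]; omega⟩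
  · exact ⟨_, subset_rfl, by omega, Nat.zero_le _⟩
  · obtain ⟨T, hT, hlo, hhi⟩ :=
      exists_subset_sum_mem_Icc _ 3 (burnerRadius_le_sum K) ((K + 1) / 2) a (by omega)
    have := sum_sdiff hT (f := fun q => 2 * burnerRadius K q + 1)
    exact ⟨T, hT, hlo, by omega⟩

section PathStrategy

variable {n : ℕ}

/-- Burner's strategy when Burner moves at rounds `i, i + 2, …`: the vertices left of `a` are
covered by the intervals indexed by `T`, packed from the left end, and the last `b` vertices by
the remaining ones, packed from the right end. -/
theorem endBy_pathGraph_of_split {K i : ℕ} {turn : ℕ → Bool}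
    (hturn : ∀ j, turn (i + 2 * j) = true) (B : Finset (Fin n)) {a b : ℕ} {T : Finset ℕ}
    (hT : T ⊆ range ((K + 1) / 2)) (ha : a ≤ ∑ q ∈ T, (2 * burnerRadius K q + 1))
    (hb : b ≤ ∑ q ∈ range ((K + 1) / 2) \ T, (2 * burnerRadius K q + 1))
    (hB : ∀ x : Fin n, a ≤ x → x + b < n → ∃ y ∈ B, Nat.dist x y ≤ K) :
    EndBy (pathGraph n) turn i B K := by
  set Q := (K + 1) / 2
  set ρ := burnerRadius K
  have hρ : ∀ q < Q, ρ q < K ∧ turn (i + K - 1 - ρ q) = true ∧ ρ q / 2 = q := by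
    intro q hq
    have hρq : ρ q = 2 * q + (K + 1) % 2 := rfl
    refine ⟨by omega, ?_, by omega⟩
    rw [show i + K - 1 - ρ q = i + 2 * (Q - 1 - q) by omega]
    exact hturn _
  refine endBy_pathGraph_of_forall_near turn (fun m => if m / 2 ∈ T then packCenter T ρ (m / 2)
    else n - 1 - packCenter (range Q \ T) ρ (m / 2)) K i B fun x => ?_
  by_cases hxa : (x : ℕ) < a
  · obtain ⟨q, hq, hxq⟩ := exists_dist_packCenter_le ρ T (hxa.trans_le ha)
    obtain ⟨hρK, hρturn, hρq⟩ := hρ q (mem_range.1 (hT hq))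
    exact Or.inr ⟨ρ q, hρK, hρturn, by simpa [hρq, hq] using hxq⟩
  by_cases hxb : n ≤ x + b
  · obtain ⟨q, hq, hxq⟩ :=
      exists_dist_packCenter_le ρ (range Q \ T) (x := n - 1 - x) (by have := x.isLt; omega)
    obtain ⟨hqQ, hqT⟩ := mem_sdiff.1 hq
    obtain ⟨hρK, hρturn, hρq⟩ := hρ q (mem_range.1 hqQ)
    refine Or.inr ⟨ρ q, hρK, hρturn, ?_⟩
    simp only [hρq, hqT, ↓reduceIte]
    have := x.isLt
    unfold Nat.dist at *
    omega
  · exact Or.inl (hB x (by omega) (by omega))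

theorem endBy_pathGraph_burner_first {K : ℕ} (hK : 2 * n ≤ K * K + K) :
    EndBy (pathGraph n) (fun i => i % 2 == 0) 0 ∅ K := by
  have hS := two_mul_sum_burnerRadius K
  refine endBy_pathGraph_of_split (by simp) ∅ (a := n) (b := 0) subset_rfl
    (by nlinarith) (Nat.zero_le _) fun x hx _ => absurd x.isLt (by omega)

theorem endBy_pathGraph_staller_first {K : ℕ} (hK : 2 * n ≤ K * K + K) :
    EndBy (pathGraph n) (fun i => i % 2 == 1) 0 ∅ K := by
  rcases K with _ | K
  · obtain rfl : n = 0 := by omega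
    exact (univ_eq_empty).symm
  refine Or.inr (Or.inr ?_)
  rw [spread_empty, if_neg (by decide)]
  intro v _
  rw [insert_empty]
  have hv := v.isLt
  have hKK : K * (K + 1) = K * K + K := by ring
  have hK' : 2 * n ≤ K * K + 3 * K + 2 := by nlinarith
  have hab : 2 * ((v - K) + (n - 1 - v - K)) ≤ K * (K + 1) := by omega
  have h3 : v - K = 0 ∨ n - 1 - v - K = 0 ∨
      2 * ((v - K) + (n - 1 - v - K) + 3) ≤ K * (K + 1) := by
    rcases lt_or_ge K 3 with hK3 | hK3
    · interval_cases K <;> omega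
    · omega
  obtain ⟨T, hT, ha, hb⟩ := exists_burnerRadius_split K hab h3
  exact endBy_pathGraph_of_split (i := 1) (fun j => by simp [Nat.add_mod]) {v} hT ha hb
    fun x _ _ => ⟨v, mem_singleton_self v, by unfold Nat.dist; omega⟩

end PathStrategy

lemma ceil_sqrt_sub_one_le {c : ℝ} {k : ℕ} (h : c ≤ ((k : ℝ) + 1) ^ 2) :
    ⌈√c - 1⌉ ≤ k := by
  have := Real.sqrt_le_sqrt h
  rw [Real.sqrt_sq (by positivity)] at this
  rw [Int.ceil_le]
  push_cast
  linarith

lemma exists_natCast_eq_ceil_sqrt (n : ℕ) :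
    ∃ K : ℕ, (K : ℤ) = ⌈√(2 * (n : ℝ) + 1 / 4) - 1 / 2⌉ ∧ 2 * n ≤ K * K + K := by
  have hx : 0 ≤ √(2 * (n : ℝ) + 1 / 4) - 1 / 2 := by
    have : (1 / 2 : ℝ) ≤ √(2 * (n : ℝ) + 1 / 4) :=
      Real.le_sqrt_of_sq_le (by have := n.cast_nonneg (α := ℝ); nlinarith)
    linarith
  refine ⟨_, Int.natCast_ceil_eq_ceil hx, ?_⟩
  set K := ⌈√(2 * (n : ℝ) + 1 / 4) - 1 / 2⌉₊
  have hsqrt : √(2 * (n : ℝ) + 1 / 4) ≤ K + 1 / 2 := by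
    linarith [Nat.le_ceil (√(2 * (n : ℝ) + 1 / 4) - 1 / 2)]
  have hsq := (Real.sqrt_le_left (by positivity)).1 hsqrt
  exact_mod_cast (by nlinarith : (2 * n : ℝ) ≤ K * K + K)

theorem stmt16 (n : ℕ) (hn : 1 ≤ n) :
    (⌈Real.sqrt (2 * (n : ℝ) + 1) - 1⌉ ≤ (bg (SimpleGraph.pathGraph n) : ℤ) ∧
      (bg (SimpleGraph.pathGraph n) : ℤ) ≤ ⌈Real.sqrt (2 * (n : ℝ) + 1/4) - 1/2⌉) ∧
    (⌈Real.sqrt (2 * (n : ℝ) + 2) - 1⌉ ≤ (bg' (SimpleGraph.pathGraph n) : ℤ) ∧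
      (bg' (SimpleGraph.pathGraph n) : ℤ) ≤ ⌈Real.sqrt (2 * (n : ℝ) + 1/4) - 1/2⌉) := by
  classical
  obtain ⟨m, rfl⟩ := Nat.exists_eq_add_of_le' hn
  have hconn := pathGraph_connected m
  have hdeg := pathGraph_degree_le_two (n := m + 1)
  obtain ⟨K, hKceil, hK⟩ := exists_natCast_eq_ceil_sqrt (m + 1)
  have hB := endBy_pathGraph_burner_first hK
  have hS := endBy_pathGraph_staller_first hK
  have hbg : 2 * (m + 1) + 1 ≤ (bg (pathGraph (m + 1)) + 1) ^ 2 := by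
    have := sq_le_of_endBy_burner_first hconn hdeg (Nat.sInf_mem ⟨K, hB⟩)
    rwa [Fintype.card_fin] at this
  have hbg' : 2 * (m + 1) + 2 ≤ (bg' (pathGraph (m + 1)) + 1) ^ 2 := by
    have := sq_le_of_endBy_staller_first hconn hdeg (pathGraph_degree_zero_le_one m.succ_pos)
      (Nat.sInf_mem ⟨K, hS⟩)
    rwa [Fintype.card_fin] at this
  refine ⟨⟨ceil_sqrt_sub_one_le ?_, hKceil ▸ ?_⟩, ceil_sqrt_sub_one_le ?_, hKceil ▸ ?_⟩
  · exact_mod_cast hbg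
  · exact_mod_cast Nat.sInf_le hB
  · exact_mod_cast hbg'
  · exact_mod_cast Nat.sInf_le hS

end BurningGame
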